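/- arXiv:2106.07707 — 5 statements merged into one kernel-verified Lean document; each statement's English description precedes it below -/
import Mathlib

section
/- Let ⟨A,∧,∨,→,∼,1⟩ be a Nelson algebra. Then for all x,y in A: x∧∼(x∧∼y) = x∧(x↣y), where x↣y:=(x→y)∧(∼y→∼x). -/
/-!
By N4 and N3, `x ∧ ∼(x ∧ ∼y) = x ∧ (∼x ∨ y)`, which is `x ∧ (x → y)` by N7, so it suffices to
show `x ∧ (∼x ∨ y) = (x ∧ ∼x) ∨ (x ∧ y)` lies below `∼y → ∼x`. In a Nelson algebra `∼a ≤ a → b`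
(because `∼a → (a → b) = (∼a ∧ a) → b = 1`), so with `a = ∼y` we get `y ≤ ∼y → ∼x`, which
disposes of `x ∧ y`. For `x ∧ ∼x`, N5 splits it as `(x ∧ ∼x ∧ y) ∨ (x ∧ ∼x ∧ ∼y)`; the first
part lies below `y`, and below `∼y` N7 turns `∼y → ∼x` into `y ∨ ∼x`, which dominates the
second part since it lies below `∼x`.
-/

/-- A Nelson algebra ⟨A,∧,∨,→,∼,1⟩ of type (2,2,2,1,0). -/
structure NelsonAlgebra (A : Type*) where
  meet : A → A → A
  join : A → A → A
  imp : A → A → A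
  neg : A → A
  one : A
  n1 : ∀ x y, meet x (join x y) = x
  n2 : ∀ x y z, meet x (join y z) = join (meet z x) (meet y x)
  n3 : ∀ x, neg (neg x) = x
  n4 : ∀ x y, neg (meet x y) = join (neg x) (neg y)
  n5 : ∀ x y, meet x (neg x) = meet (meet x (neg x)) (join y (neg y))
  n6 : ∀ x, imp x x = one
  n7 : ∀ x y, meet x (imp x y) = meet x (join (neg x) y)
  n8 : ∀ x y z, imp (meet x y) z = imp x (imp y z)

/-- The weak implication x↣y := (x→y)∧(∼y→∼x). -/
def NelsonAlgebra.wimp {A : Type*} (N : NelsonAlgebra A) (x y : A) : A :=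
  N.meet (N.imp x y) (N.imp (N.neg y) (N.neg x))

namespace NelsonAlgebra

variable {A : Type*} (N : NelsonAlgebra A)

lemma meet_self (x : A) : N.meet x x = x := by
  have hjoin : N.join (N.meet x x) (N.meet x x) = x := by
    rw [← N.n2, N.n1]
  have hmeet : N.meet (N.meet x x) x = N.meet x x := by
    simpa only [hjoin] using N.n1 (N.meet x x) (N.meet x x)
  simpa only [hjoin, hmeet] using N.n2 x (N.meet x x) (N.meet x x)

lemma join_self (x : A) : N.join x x = x := by
  have h := N.n2 x x x
  rw [N.n1, N.meet_self] at h
  exact h.symm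

lemma meet_comm (x y : A) : N.meet x y = N.meet y x := by
  simpa only [N.join_self] using N.n2 x y y

lemma join_meet_self_right (a b : A) : N.join (N.meet b a) a = a := by
  simpa only [N.n1, N.meet_self] using (N.n2 a a b).symm

lemma meet_join_self_right (a b : A) : N.meet a (N.join b a) = a := by
  have hrearrange : N.join b a = N.join (N.join a (N.meet b a)) b := by
    simpa only [N.meet_self, N.n1, N.n2 a b a] using N.n2 (N.join b a) b a
  rw [hrearrange, N.n2, N.meet_comm (N.join _ _) a, N.n1, N.join_meet_self_right]

lemma join_comm (a b : A) : N.join a b = N.join b a := by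
  simpa only [N.meet_self, N.n1, N.meet_join_self_right] using N.n2 (N.join a b) a b

lemma meet_eq_left_iff_join_eq_right (a b : A) : N.meet a b = a ↔ N.join a b = b :=
  ⟨fun h => h ▸ N.join_meet_self_right b a, fun h => h ▸ N.n1 a b⟩

/-- Sholander's axioms N1, N2 make `A` a distributive lattice under `a ≤ b ↔ a ∧ b = a`, with
`⊓ = N.meet` and `⊔ = N.join` definitionally; the proofs below switch to lattice notation by
`let := N.toDistribLattice`. -/
@[reducible] def toDistribLattice : DistribLattice A :=
  letI : Lattice A :=
    { le := fun a b => N.meet a b = a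
      le_refl := N.meet_self
      le_trans := fun a b c (hab : N.meet a b = a) (hbc : N.meet b c = b) => by
        rw [← (N.meet_eq_left_iff_join_eq_right b c).1 hbc, N.n2, N.meet_comm b a, hab,
          N.join_meet_self_right]
      le_antisymm := fun a b (hab : N.meet a b = a) (hba : N.meet b a = b) =>
        hab.symm.trans ((N.meet_comm a b).trans hba)
      sup := N.join
      le_sup_left := N.n1
      le_sup_right := fun a b => N.meet_join_self_right b a
      sup_le := fun a b c (hac : N.meet a c = a) (hbc : N.meet b c = b) => by
        rw [N.meet_comm, N.n2, hbc, hac, N.join_comm]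
      inf := N.meet
      inf_le_left := fun a b => (N.meet_eq_left_iff_join_eq_right _ _).2 <| by
        rw [N.meet_comm]; exact N.join_meet_self_right a b
      inf_le_right := fun a b =>
        (N.meet_eq_left_iff_join_eq_right _ _).2 (N.join_meet_self_right b a)
      le_inf := fun a b c (hab : N.meet a b = a) (hac : N.meet a c = a) => by
        have h := N.n2 b c a
        rw [hab, N.join_comm c a, (N.meet_eq_left_iff_join_eq_right a c).1 hac,
          N.meet_comm c b] at h
        exact (N.meet_eq_left_iff_join_eq_right _ _).2 h.symm }
  DistribLattice.ofInfSupLe fun a b c => le_of_eq <| by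
    change N.meet a (N.join b c) = N.join (N.meet a b) (N.meet a c)
    rw [N.n2, N.meet_comm c, N.meet_comm b, N.join_comm]

lemma imp_eq_one_of_meet_eq {a b : A} (h : N.meet a b = a) : N.imp a b = N.one := by
  rw [← h, N.n8, N.n6, ← N.n6 a, ← N.n8, N.meet_self]

lemma meet_one (x : A) : N.meet x N.one = x := by
  rw [← N.n6 x, N.n7, N.meet_join_self_right]

lemma meet_imp_of_meet_eq {d a : A} (h : N.meet d a = d) (b : A) :
    N.meet d (N.imp a b) = N.meet d (N.join (N.neg a) b) := by
  let := N.toDistribLattice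
  have h : d ⊓ a = d := h
  have h7 : a ⊓ N.imp a b = a ⊓ (N.neg a ⊔ b) := N.n7 a b
  change d ⊓ N.imp a b = d ⊓ (N.neg a ⊔ b)
  rw [← h, inf_assoc, h7, ← inf_assoc]

lemma meet_neg_self_imp_eq_one (a b : A) : N.imp (N.meet a (N.neg a)) b = N.one := by
  let := N.toDistribLattice
  set c := N.meet a (N.neg a)
  have hneg : N.neg c = N.neg a ⊔ a := by rw [N.n4, N.n3]; rfl
  have hcc : N.meet c (N.neg c) = c := inf_eq_left.2 (hneg ▸ inf_le_right.trans le_sup_left)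
  have hle : N.meet c (N.imp (N.neg c) b) = c := by
    rw [N.meet_imp_of_meet_eq hcc, N.n3]
    exact inf_sup_self
  rw [← hcc, N.n8, N.imp_eq_one_of_meet_eq hle]

lemma neg_meet_imp (a b : A) : N.meet (N.neg a) (N.imp a b) = N.neg a := by
  let := N.toDistribLattice
  set t := N.imp a b
  have hone : N.imp (N.neg a) t = N.one := by
    rw [← N.n8, N.meet_comm]
    exact N.meet_neg_self_imp_eq_one a b
  have hjoin : N.neg a ≤ a ⊔ t := by
    have h := N.n7 (N.neg a) t
    rw [hone, N.meet_one, N.n3] at h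
    exact inf_eq_left.1 h.symm
  have hmeet : N.neg a ⊓ a ≤ t := by
    have h : a ⊓ N.neg a ⊓ t = a ⊓ N.neg a ⊓ (N.neg a ⊔ b) :=
      N.meet_imp_of_meet_eq (inf_eq_left.2 inf_le_left) b
    have hneg : a ⊓ N.neg a ≤ N.neg a ⊔ b := inf_le_right.trans le_sup_left
    rw [inf_eq_left.2 hneg, inf_eq_left, inf_comm] at h
    exact h
  refine inf_eq_left.2 ?_
  calc N.neg a = N.neg a ⊓ (a ⊔ t) := (inf_eq_left.2 hjoin).symm
    _ = N.neg a ⊓ a ⊔ N.neg a ⊓ t := inf_sup_left _ _ _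
    _ ≤ t := sup_le hmeet inf_le_right

lemma meet_imp_le_contrapositive (x y : A) :
    N.meet (N.meet x (N.imp x y)) (N.imp (N.neg y) (N.neg x)) = N.meet x (N.imp x y) := by
  let := N.toDistribLattice
  set w := N.imp (N.neg y) (N.neg x)
  have hy : y ≤ w := by
    have h := N.neg_meet_imp (N.neg y) (N.neg x)
    rw [N.n3] at h
    exact inf_eq_left.1 h
  have hneg : x ⊓ N.neg x ⊓ N.neg y ≤ w := by
    have hd : x ⊓ N.neg x ⊓ N.neg y ≤ N.neg y := inf_le_right
    have h := N.meet_imp_of_meet_eq (inf_eq_left.2 hd) (N.neg x)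
    rw [N.n3] at h
    refine inf_eq_left.1 (h.trans (inf_eq_left.2 ?_))
    exact le_sup_of_le_right (inf_le_left.trans inf_le_right)
  have hcontra : x ⊓ N.neg x ≤ w := by
    have h5 : x ⊓ N.neg x = x ⊓ N.neg x ⊓ (y ⊔ N.neg y) := N.n5 x y
    rw [h5, inf_sup_left]
    exact sup_le (inf_le_right.trans hy) hneg
  have h7 : x ⊓ N.imp x y = x ⊓ N.neg x ⊔ x ⊓ y := (N.n7 x y).trans (inf_sup_left _ _ _)
  change x ⊓ N.imp x y ⊓ w = x ⊓ N.imp x y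
  rw [inf_eq_left, h7]
  exact sup_le hcontra (inf_le_right.trans hy)

end NelsonAlgebra

theorem nelson_B3 {A : Type*} (N : NelsonAlgebra A) (x y : A) :
    N.meet x (N.neg (N.meet x (N.neg y))) = N.meet x (N.wimp x y) := by
  let := N.toDistribLattice
  calc N.meet x (N.neg (N.meet x (N.neg y))) = N.meet x (N.imp x y) := by rw [N.n4, N.n3, N.n7]
    _ = x ⊓ N.imp x y ⊓ N.imp (N.neg y) (N.neg x) := (N.meet_imp_le_contrapositive x y).symm
    _ = N.meet x (N.wimp x y) := inf_assoc _ _ _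
end

section
/- Let ⟨A,∧,↣,0⟩ be a Brignole algebra. Then for every x in A: ∼∼x = x, i.e., (x↣0)↣0 = x. -/
/-- A Brignole algebra ⟨A,∧,↣,0⟩ of type (2,2,0), with the abbreviations
∼x := x↣0 and x∨y := ((x↣0)∧(y↣0))↣0 written out in the axioms. -/
structure BrignoleAlgebra (A : Type*) where
  meet : A → A → A
  himp : A → A → A
  zero : A
  b1 : ∀ x y, himp (himp x x) y = y
  b2 : ∀ x y, meet (himp x y) y = y
  b3 : ∀ x y, meet x (himp (meet x (himp y zero)) zero) = meet x (himp x y)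
  b4 : ∀ x y z, himp x (meet y z) = meet (himp x y) (himp x z)
  b5 : ∀ x y, himp x y = himp (himp y zero) (himp x zero)
  b6 : ∀ x y z, himp x (himp x (himp y (himp y z))) =
    himp (meet x y) (himp (meet x y) z)
  b7 : ∀ x y, himp (himp (meet (himp x zero) y) zero) (himp x y) = himp x y
  b8 : ∀ x y, meet x (himp (meet (himp x zero) (himp y zero)) zero) = x
  b9 : ∀ x y z, meet x (himp (meet (himp y zero) (himp z zero)) zero) =
    himp (meet (himp (meet z x) zero) (himp (meet y x) zero)) zero
  b10 : ∀ x y, meet (meet x (himp x zero))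
      (himp (meet (himp y zero) (himp (himp y zero) zero)) zero) =
    meet x (himp x zero)

/-- The negation ∼x := x↣0. -/
def BrignoleAlgebra.neg {A : Type*} (B : BrignoleAlgebra A) (x : A) : A :=
  B.himp x B.zero

/-- The join x∨y := ((x↣0)∧(y↣0))↣0. -/
def BrignoleAlgebra.join {A : Type*} (B : BrignoleAlgebra A) (x y : A) : A :=
  B.himp (B.meet (B.himp x B.zero) (B.himp y B.zero)) B.zero

/-- The strong implication x→y := x↣(x↣y). -/
def BrignoleAlgebra.imp {A : Type*} (B : BrignoleAlgebra A) (x y : A) : A :=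
  B.himp x (B.himp x y)

/-- The unit 1 := 0↣0. -/
def BrignoleAlgebra.one {A : Type*} (B : BrignoleAlgebra A) : A :=
  B.himp B.zero B.zero

theorem brignole_neg_neg {A : Type*} (B : BrignoleAlgebra A) (x : A) :
    B.himp (B.himp x B.zero) B.zero = x := by
  -- Contrapose `1 ↣ x = x` (B1) with (B5); the consequent `∼1 = 1 ↣ 0` is `0` by (B1) again.
  calc B.himp (B.himp x B.zero) B.zero
      = B.himp (B.himp x B.zero) (B.himp (B.himp B.zero B.zero) B.zero) := by rw [B.b1]
    _ = B.himp (B.himp B.zero B.zero) x := (B.b5 _ _).symm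
    _ = x := B.b1 _ _
end

section
/- Let ⟨A,∧,↣,0⟩ be a Brignole algebra and define x→y:=x↣(x↣y). Then for all x,y in A: x∧(x→y) = x∧(∼x∨y), where ∼x:=x↣0 and x∨y:=((x↣0)∧(y↣0))↣0. -/
/-!
Both sides equal `x ∧ (x ↣ y)`. On the right, `∼∼x = x` turns `x ∧ (∼x ∨ y)` into
`x ∧ ∼(x ∧ ∼y)`, which is (B3). On the left, (B3) applied to `x ↣ y` gives
`x ∧ (x → y) = x ∧ ∼(x ∧ ∼(x ↣ y))`, and this collapses to `x ∧ (x ↣ y)` because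
`x ∧ ∼(x ↣ y) = ∼(x ↣ y)`: absorption (B8) reduces this to `(x ↣ y) ∧ ∼x = ∼x`,
which is (B2) after contraposing `x ↣ y` by (B5).
-/

namespace BrignoleAlgebra

variable {A : Type*} (B : BrignoleAlgebra A)

theorem one_himp (x : A) : B.himp B.one x = x :=
  B.b1 B.zero x

theorem neg_one : B.neg B.one = B.zero :=
  B.one_himp B.zero

theorem neg_neg (x : A) : B.neg (B.neg x) = x :=
  calc B.neg (B.neg x) = B.himp (B.neg x) (B.neg B.one) := by rw [neg_one]; rfl
    _ = B.himp B.one x := (B.b5 B.one x).symm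
    _ = x := B.one_himp x

theorem himp_self (x : A) : B.himp x x = B.one :=
  calc B.himp x x = B.neg (B.neg (B.himp x x)) := (B.neg_neg _).symm
    _ = B.neg B.zero := congrArg B.neg (B.b1 x B.zero)
    _ = B.one := rfl

theorem one_meet (x : A) : B.meet B.one x = x := by
  simpa only [himp_self] using B.b2 x x

theorem meet_one (x : A) : B.meet x B.one = x := by
  have h : B.meet x (B.neg (B.meet (B.neg x) (B.neg B.one))) = x := B.b8 x B.one
  rwa [neg_one, show B.meet (B.neg x) B.zero = B.zero from B.b2 x B.zero] at h

theorem meet_neg_comm (x y : A) :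
    B.meet (B.neg x) (B.neg y) = B.meet (B.neg y) (B.neg x) := by
  have h : B.meet B.one (B.neg (B.meet (B.neg x) (B.neg y))) =
      B.neg (B.meet (B.neg (B.meet y B.one)) (B.neg (B.meet x B.one))) := B.b9 B.one x y
  rw [one_meet, meet_one, meet_one] at h
  simpa only [neg_neg] using congrArg B.neg h

theorem meet_comm (x y : A) : B.meet x y = B.meet y x := by
  simpa only [neg_neg] using B.meet_neg_comm (B.neg x) (B.neg y)

theorem himp_meet_neg (x y : A) : B.meet (B.himp x y) (B.neg x) = B.neg x := by
  rw [B.b5 x y]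
  exact B.b2 (B.neg y) (B.neg x)

theorem meet_neg_himp (x y : A) : B.meet x (B.neg (B.himp x y)) = B.neg (B.himp x y) := by
  have h : B.meet (B.neg (B.himp x y))
      (B.neg (B.meet (B.neg (B.neg (B.himp x y))) (B.neg x))) = B.neg (B.himp x y) :=
    B.b8 _ x
  rwa [neg_neg, himp_meet_neg, neg_neg, meet_comm] at h

theorem meet_imp (x y : A) : B.meet x (B.imp x y) = B.meet x (B.himp x y) := by
  have h : B.meet x (B.neg (B.meet x (B.neg (B.himp x y)))) = B.meet x (B.imp x y) :=
    B.b3 x (B.himp x y)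
  rwa [meet_neg_himp, neg_neg, eq_comm] at h

theorem meet_join_neg (x y : A) :
    B.meet x (B.join (B.neg x) y) = B.meet x (B.himp x y) := by
  change B.meet x (B.neg (B.meet (B.neg (B.neg x)) (B.neg y))) = _
  rw [neg_neg]
  exact B.b3 x y

end BrignoleAlgebra

theorem brignole_N7 {A : Type*} (B : BrignoleAlgebra A) (x y : A) :
    B.meet x (B.imp x y) = B.meet x (B.join (B.neg x) y) :=
  (B.meet_imp x y).trans (B.meet_join_neg x y).symm
end

section
/- Let ⟨A,∧,↣,0⟩ be an algebra of type (2,2,0) satisfying axioms (B1), (B3), (B4), (B5), (B6), (B7), (B9) and (B10) (but not assuming (B2) or (B8)). Then ∧ is commutative: for all x,y in A, x∧y = y∧x. -/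
/-- An algebra ⟨A,∧,↣,0⟩ of type (2,2,0) satisfying the Brignole axioms
(B1), (B3), (B4), (B5), (B6), (B7), (B9) and (B10), but NOT assuming
(B2) or (B8).  The abbreviations ∼x := x↣0 and
x∨y := ((x↣0)∧(y↣0))↣0 are written out in the axioms. -/
structure BrignoleCore (A : Type*) where
  meet : A → A → A
  himp : A → A → A
  zero : A
  b1 : ∀ x y, himp (himp x x) y = y
  b3 : ∀ x y, meet x (himp (meet x (himp y zero)) zero) = meet x (himp x y)
  b4 : ∀ x y z, himp x (meet y z) = meet (himp x y) (himp x z)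
  b5 : ∀ x y, himp x y = himp (himp y zero) (himp x zero)
  b6 : ∀ x y z, himp x (himp x (himp y (himp y z))) =
    himp (meet x y) (himp (meet x y) z)
  b7 : ∀ x y, himp (himp (meet (himp x zero) y) zero) (himp x y) = himp x y
  b9 : ∀ x y z, meet x (himp (meet (himp y zero) (himp z zero)) zero) =
    himp (meet (himp (meet z x) zero) (himp (meet y x) zero)) zero
  b10 : ∀ x y, meet (meet x (himp x zero))
      (himp (meet (himp y zero) (himp (himp y zero) zero)) zero) =
    meet x (himp x zero)

/-! Since `0 ↣ 0` is a left unit for `↣` (B1), contraposition (B5) makes `∼` an involution.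
(B7) at `x = 0 ↣ 0` then yields `0 ∧ 0 = 0`, so (B4) gives `∼x ∧ ∼x = ∼x`, and by involutivity
`∧` is idempotent. With `y = z`, distributivity (B9) reads `x ∧ ∼∼y = ∼∼(y ∧ x)`, i.e.
`x ∧ y = y ∧ x`. -/

namespace BrignoleCore

variable {A : Type*} (B : BrignoleCore A)

lemma himp_zero_himp_zero (x : A) : B.himp (B.himp x B.zero) B.zero = x := by
  simpa only [B.b1] using (B.b5 (B.himp B.zero B.zero) x).symm

lemma meet_zero_zero : B.meet B.zero B.zero = B.zero := by
  have h := B.b7 (B.himp B.zero B.zero) B.zero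
  simp only [B.b1] at h
  rwa [himp_zero_himp_zero] at h

lemma meet_self (x : A) : B.meet x x = x := by
  have h := B.b4 (B.himp x B.zero) B.zero B.zero
  rwa [meet_zero_zero, himp_zero_himp_zero, eq_comm] at h

end BrignoleCore

theorem brignoleCore_meet_comm {A : Type*} (B : BrignoleCore A) (x y : A) :
    B.meet x y = B.meet y x := by
  have h := B.b9 x y y
  simp only [B.meet_self, B.himp_zero_himp_zero] at h
  exact h
end

section
/- Axiom (B1) is independent of the remaining Brignole axioms: there exists a three-element algebra ⟨A,∧,↣,0⟩ of type (2,2,0) that satisfies axioms (B2)–(B10) for all elements, but in which (B1) fails, i.e., there exist x,y in A with (x↣x)↣y ≠ y. (A witness is A={0,a,1} with ↣ given by 0↣0=0↣a=0↣1=1, a↣0=a↣a=a, a↣1=1, 1↣0=0, 1↣a=a, 1↣1=1, and ∧ the meet of the chain 0<a<1; here (a↣a)↣0=a≠0.) -/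
/-- The implication of the counter-model on the chain `0 < a < 1`, encoded as `0 < 1 < 2` in
`Fin 3`; its meet is `min`. -/
def b1CounterHimp : Fin 3 → Fin 3 → Fin 3
  | 0, _ => 2
  | 1, 2 => 2
  | 1, _ => 1
  | 2, y => y

/-- Axiom (B1) is independent of the remaining Brignole axioms: there is a
three-element algebra ⟨A,∧,↣,0⟩ of type (2,2,0) satisfying (B2)–(B10) for all
elements, in which (B1) fails. -/
theorem brignole_b1_independent :
    ∃ (A : Type) (meet himp : A → A → A) (zero : A),
      Nat.card A = 3 ∧
      -- (B2)
      (∀ x y, meet (himp x y) y = y) ∧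
      -- (B3)
      (∀ x y, meet x (himp (meet x (himp y zero)) zero) = meet x (himp x y)) ∧
      -- (B4)
      (∀ x y z, himp x (meet y z) = meet (himp x y) (himp x z)) ∧
      -- (B5)
      (∀ x y, himp x y = himp (himp y zero) (himp x zero)) ∧
      -- (B6)
      (∀ x y z, himp x (himp x (himp y (himp y z))) =
        himp (meet x y) (himp (meet x y) z)) ∧
      -- (B7)
      (∀ x y, himp (himp (meet (himp x zero) y) zero) (himp x y) = himp x y) ∧
      -- (B8)
      (∀ x y, meet x (himp (meet (himp x zero) (himp y zero)) zero) = x) ∧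
      -- (B9)
      (∀ x y z, meet x (himp (meet (himp y zero) (himp z zero)) zero) =
        himp (meet (himp (meet z x) zero) (himp (meet y x) zero)) zero) ∧
      -- (B10)
      (∀ x y, meet (meet x (himp x zero))
          (himp (meet (himp y zero) (himp (himp y zero) zero)) zero) =
        meet x (himp x zero)) ∧
      -- (B1) fails
      (∃ x y, himp (himp x x) y ≠ y) := by
  -- (B1) fails at `(a ↣ a) ↣ 0 = a ↣ 0 = a`.
  refine ⟨Fin 3, min, b1CounterHimp, 0, Nat.card_eq_fintype_card.trans (Fintype.card_fin 3),
    ?_, ?_, ?_, ?_, ?_, ?_, ?_, ?_, ?_, ⟨1, 0, by decide⟩⟩ <;> decide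
end
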